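/- arXiv:1003.6021 — 2 statements merged into one kernel-verified Lean document; each statement's English description precedes it below -/
import Mathlib

section
/- Let C_i := (−1)^{i+1}(1/i + 1/(i+1)) for i ≥ 1. Then (a) the series ∑_{i≥1} |C_i| diverges; and (b) for every continuously differentiable function φ : ℝ → ℝ with compact support, the series ∑_{i≥1} C_i φ(1/i) converges. In particular the series of Dirac masses ∑_{i≥1} C_i δ_{1/i} converges in the sense of distributions on ℝ although the sum of the absolute weights diverges. -/
/-!
The weights telescope, `C i = u (i + 1) - u i` with `u j = (-1)^j / j → 0`, so `∑ C i` converges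
(to `1`), while `|C i| ≥ 1 / i` makes `∑ |C i|` diverge like the harmonic series.
A `C¹` function with compact support is Lipschitz, say with constant `K`. Splitting
`φ (1 / i) = φ 0 + (φ (1 / i) - φ 0)`, the first part contributes `φ 0 * ∑ C i`, and the second
is absolutely summable because `|C i| ≤ 2 / i` and `|φ (1 / i) - φ 0| ≤ K / i`.
-/

open Filter Topology

/-- The weights `C i = (−1)^(i+1) (1/i + 1/(i+1))`, `i ≥ 1`, of the paper's
counterexample. -/
noncomputable def counterWeight (i : ℕ) : ℝ :=
  (-1 : ℝ) ^ (i + 1) * (1 / (i : ℝ) + 1 / ((i : ℝ) + 1))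

open Finset
open scoped NNReal

theorem Finset.sum_Icc_one_eq_sum_range {M : Type*} [AddCommMonoid M] (f : ℕ → M) (N : ℕ) :
    ∑ i ∈ Icc 1 N, f i = ∑ i ∈ range N, f (i + 1) := by
  rw [range_eq_Ico, sum_Ico_add' f 0 N 1, zero_add, Ico_add_one_right_eq_Icc]

theorem tendsto_sum_Icc_one_div_atTop :
    Tendsto (fun N : ℕ => ∑ i ∈ Icc 1 N, 1 / (i : ℝ)) atTop atTop := by
  simpa only [sum_Icc_one_eq_sum_range, Nat.cast_add_one] using
    Real.tendsto_sum_range_one_div_nat_succ_atTop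

theorem tendsto_neg_one_pow_div_natCast_zero :
    Tendsto (fun j : ℕ => (-1 : ℝ) ^ j / j) atTop (𝓝 0) :=
  squeeze_zero_norm (fun j => by simp) tendsto_one_div_atTop_nhds_zero_nat

theorem summable_mul_sub_of_lipschitzWith {c : ℕ → ℝ} {A : ℝ} {K : ℝ≥0} {φ : ℝ → ℝ}
    (hcA : ∀ i, i ≠ 0 → |c i| ≤ A / i) (hφ : LipschitzWith K φ) :
    Summable (fun i : ℕ => c (i + 1) * (φ (1 / (i + 1 : ℕ)) - φ 0)) := by
  have hbound (i : ℕ) :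
      ‖c (i + 1) * (φ (1 / (i + 1 : ℕ)) - φ 0)‖ ≤ A * K * (1 / ((i + 1 : ℕ) : ℝ) ^ 2) := by
    have hc := hcA (i + 1) i.succ_ne_zero
    have hφi : |φ (1 / (i + 1 : ℕ)) - φ 0| ≤ K * (1 / (i + 1 : ℕ)) := by
      simpa [Real.dist_eq, abs_of_pos (Nat.cast_add_one_pos (α := ℝ) i)] using
        hφ.dist_le_mul (1 / (i + 1 : ℕ) : ℝ) 0
    calc ‖c (i + 1) * (φ (1 / (i + 1 : ℕ)) - φ 0)‖
        = |c (i + 1)| * |φ (1 / (i + 1 : ℕ)) - φ 0| := abs_mul _ _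
      _ ≤ A / (i + 1 : ℕ) * (K * (1 / (i + 1 : ℕ))) :=
          mul_le_mul hc hφi (abs_nonneg _) ((abs_nonneg _).trans hc)
      _ = A * K * (1 / ((i + 1 : ℕ) : ℝ) ^ 2) := by ring
  have hsq : Summable (fun i : ℕ => 1 / ((i + 1 : ℕ) : ℝ) ^ 2) :=
    (_root_.summable_nat_add_iff 1).mpr (Real.summable_one_div_nat_pow.mpr one_lt_two)
  exact (hsq.mul_left (A * K)).of_norm_bounded hbound

theorem exists_tendsto_sum_Icc_mul_comp_one_div {c : ℕ → ℝ} {s A : ℝ} {K : ℝ≥0} {φ : ℝ → ℝ}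
    (hc : Tendsto (fun N : ℕ => ∑ i ∈ Icc 1 N, c i) atTop (𝓝 s))
    (hcA : ∀ i, i ≠ 0 → |c i| ≤ A / i) (hφ : LipschitzWith K φ) :
    ∃ l, Tendsto (fun N : ℕ => ∑ i ∈ Icc 1 N, c i * φ (1 / i)) atTop (𝓝 l) := by
  obtain ⟨r, hr⟩ := summable_mul_sub_of_lipschitzWith hcA hφ
  refine ⟨s * φ 0 + r, (hc.mul_const (φ 0)).add hr.tendsto_sum_nat |>.congr fun N => ?_⟩
  simp only [sum_mul, sum_Icc_one_eq_sum_range, ← sum_add_distrib]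
  refine sum_congr rfl fun i _ => ?_
  ring

theorem abs_counterWeight (i : ℕ) : |counterWeight i| = 1 / i + 1 / (i + 1) := by
  rw [counterWeight, abs_mul, abs_pow, abs_neg, abs_one, one_pow, one_mul,
    abs_of_nonneg (by positivity)]

theorem one_div_le_abs_counterWeight (i : ℕ) : 1 / (i : ℝ) ≤ |counterWeight i| := by
  rw [abs_counterWeight]
  exact le_add_of_nonneg_right (by positivity)

theorem abs_counterWeight_le (i : ℕ) (hi : i ≠ 0) : |counterWeight i| ≤ 2 / i := by
  have hpos : (0 : ℝ) < i := Nat.cast_pos.mpr (Nat.pos_of_ne_zero hi)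
  calc |counterWeight i| = 1 / i + 1 / (i + 1) := abs_counterWeight i
    _ ≤ 1 / i + 1 / i := by gcongr; linarith
    _ = 2 / i := by ring

theorem counterWeight_eq_sub (i : ℕ) :
    counterWeight i = (-1 : ℝ) ^ (i + 1) / (i + 1 : ℕ) - (-1) ^ i / i := by
  rw [counterWeight, pow_succ]
  push_cast
  ring

theorem tendsto_sum_Icc_counterWeight :
    Tendsto (fun N : ℕ => ∑ i ∈ Icc 1 N, counterWeight i) atTop (𝓝 1) := by
  have hu : Tendsto (fun N : ℕ => (-1 : ℝ) ^ (N + 1) / (N + 1 : ℕ) - (-1) ^ 1 / (1 : ℕ))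
      atTop (𝓝 1) := by
    simpa using
      (tendsto_neg_one_pow_div_natCast_zero.comp (tendsto_add_atTop_nat 1)).sub_const (-1)
  refine hu.congr fun N => ?_
  simp only [sum_Icc_one_eq_sum_range, counterWeight_eq_sub]
  exact (sum_range_sub (fun j => (-1 : ℝ) ^ (j + 1) / (j + 1 : ℕ)) N).symm

/-- **Counterexample of the paper (Remark 2.2).**
(a) The series `∑_{i≥1} |C i|` diverges, while
(b) for every `C¹` compactly supported `φ : ℝ → ℝ` the series `∑_{i≥1} C i * φ(1/i)`
converges; in particular `∑_{i≥1} C i δ_{1/i}` converges as a distribution although the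
sum of the absolute weights diverges. -/
theorem dirac_series_distributional_counterexample :
    (Tendsto (fun N => ∑ i ∈ Finset.Icc 1 N, |counterWeight i|) atTop atTop) ∧
    (∀ φ : ℝ → ℝ, ContDiff ℝ 1 φ → HasCompactSupport φ →
      ∃ l : ℝ,
        Tendsto (fun N => ∑ i ∈ Finset.Icc 1 N, counterWeight i * φ (1 / (i : ℝ)))
          atTop (𝓝 l)) := by
  refine ⟨tendsto_atTop_mono (fun N => sum_le_sum fun i _ => one_div_le_abs_counterWeight i)
    tendsto_sum_Icc_one_div_atTop, fun φ hφ hφc => ?_⟩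
  obtain ⟨K, hK⟩ := hφ.lipschitzWith_of_hasCompactSupport hφc one_ne_zero
  exact exists_tendsto_sum_Icc_mul_comp_one_div tendsto_sum_Icc_counterWeight
    abs_counterWeight_le hK
end

section
/- Fix real numbers B_x, B_y and define on ℝ² ∖ {0}, with r² = x² + y², the symmetric matrix field E_xx = (−B_y x − B_x y)/(2π r²), E_xy = E_yx = (−B_y y + B_x x)/(2π r²), E_yy = (B_y x + B_x y)/(2π r²). Then E_xx, E_xy, E_yy are locally integrable on ℝ², and the distributional planar incompatibility of E is the first-order distribution η = B_y ∂_xδ₀ − B_x ∂_yδ₀; explicitly, for every φ ∈ C_c^∞(ℝ²), ∫_{ℝ²} ( E_xx ∂_y²φ + E_yy ∂_x²φ − 2 E_xy ∂_x∂_yφ ) dx dy = −B_y ∂_xφ(0,0) + B_x ∂_yφ(0,0). -/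
open MeasureTheory Real

/-- Partial derivative in the `α`-th coordinate direction of a function on `ℝ²`. -/
noncomputable def pd (α : Fin 2) (f : EuclideanSpace ℝ (Fin 2) → ℝ) :
    EuclideanSpace ℝ (Fin 2) → ℝ :=
  fun x => fderiv ℝ f x (EuclideanSpace.single α 1)

/-- `E_xx` component of the edge-dislocation strain with Burgers vector `(Bx, By)`. -/
noncomputable def Exx (Bx By : ℝ) (p : EuclideanSpace ℝ (Fin 2)) : ℝ :=
  (-By * p 0 - Bx * p 1) / (2 * π * ((p 0) ^ 2 + (p 1) ^ 2))

/-- `E_xy = E_yx` component of the edge-dislocation strain. -/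
noncomputable def Exy (Bx By : ℝ) (p : EuclideanSpace ℝ (Fin 2)) : ℝ :=
  (-By * p 1 + Bx * p 0) / (2 * π * ((p 0) ^ 2 + (p 1) ^ 2))

/-- `E_yy` component of the edge-dislocation strain. -/
noncomputable def Eyy (Bx By : ℝ) (p : EuclideanSpace ℝ (Fin 2)) : ℝ :=
  (By * p 0 + Bx * p 1) / (2 * π * ((p 0) ^ 2 + (p 1) ^ 2))

/-! In the integrand, `∂_x∂_yφ = ∂_y∂_xφ` lets everything be grouped, for `g = ∂_xφ` and
`g = ∂_yφ`, into the two quotients `(x ∂_x g + y ∂_y g) / r² = ∂_r g / r` and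
`(x ∂_y g - y ∂_x g) / r² = ∂_θ g / r²`. In polar coordinates, with area element `r dr dθ`, the
first integrates along every ray to `-g 0`, hence to `-2π g 0` in total, and the second integrates
to zero around every circle by periodicity. Local integrability of the strain comes from
`|E| ≤ C / r`, which is integrable near the origin of the plane. -/

open Set

local notation "ℝ²" => EuclideanSpace ℝ (Fin 2)

namespace EdgeDislocation

section PartialDerivatives

variable {f : ℝ² → ℝ}

lemma contDiff_pd {n : WithTop ℕ∞} (hf : ContDiff ℝ (n + 1) f) (α : Fin 2) :
    ContDiff ℝ n (pd α f) :=
  (hf.fderiv_right le_rfl).clm_apply contDiff_const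

lemma hasCompactSupport_pd (hf : HasCompactSupport f) (α : Fin 2) :
    HasCompactSupport (pd α f) :=
  hf.fderiv_apply ℝ _

lemma pd_pd_comm (hf : ContDiff ℝ 2 f) (α β : Fin 2) (x : ℝ²) :
    pd α (pd β f) x = pd β (pd α f) x := by
  have hdiff : DifferentiableAt ℝ (fderiv ℝ f) x :=
    (hf.fderiv_right (m := 1) (by norm_num)).differentiable one_ne_zero x
  have hpd (γ : Fin 2) : pd γ f = fun y => fderiv ℝ f y (EuclideanSpace.single γ 1) := rfl
  simp only [pd, hpd, fderiv_clm_apply hdiff (differentiableAt_const _), fderiv_fun_const,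
    Pi.zero_apply, ContinuousLinearMap.comp_zero, zero_add, ContinuousLinearMap.flip_apply]
  exact (hf.contDiffAt.isSymmSndFDerivAt (by simp)) _ _

end PartialDerivatives

section Polar

noncomputable def polarUnit (θ : ℝ) : ℝ² :=
  cos θ • EuclideanSpace.single 0 1 + sin θ • EuclideanSpace.single 1 1

@[simp] lemma smul_polarUnit_apply_zero (r θ : ℝ) : (r • polarUnit θ) 0 = r * cos θ := by
  simp [polarUnit]

@[simp] lemma smul_polarUnit_apply_one (r θ : ℝ) : (r • polarUnit θ) 1 = r * sin θ := by
  simp [polarUnit]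

lemma polarUnit_ne_zero (θ : ℝ) : polarUnit θ ≠ 0 := by
  intro h
  have h0 := smul_polarUnit_apply_zero 1 θ
  have h1 := smul_polarUnit_apply_one 1 θ
  rw [h, smul_zero, PiLp.zero_apply, one_mul] at h0 h1
  simpa [← h0, ← h1] using cos_sq_add_sin_sq θ

noncomputable def prodEquivEuclidean : (ℝ × ℝ) ≃ᵐ ℝ² :=
  MeasurableEquiv.finTwoArrow.symm.trans (MeasurableEquiv.toLp 2 (Fin 2 → ℝ))

lemma measurePreserving_prodEquivEuclidean : MeasurePreserving prodEquivEuclidean :=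
  (PiLp.volume_preserving_toLp (Fin 2)).comp (volume_preserving_finTwoArrow ℝ).symm

lemma prodEquivEuclidean_polarCoord_symm (q : ℝ × ℝ) :
    prodEquivEuclidean (polarCoord.symm q) = q.1 • polarUnit q.2 := by
  ext i
  fin_cases i <;> simp [prodEquivEuclidean, polarUnit]

lemma integrableOn_polarCoord_target {E : Type*} [NormedAddCommGroup E] [NormedSpace ℝ E]
    {f : ℝ × ℝ → E} (hf : Integrable f) :
    IntegrableOn (fun q => q.1 • f (polarCoord.symm q)) polarCoord.target := by
  have h := integrableOn_image_iff_integrableOn_abs_det_fderiv_smul volume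
    polarCoord.open_target.measurableSet
    (fun q _ => (hasFDerivAt_polarCoord_symm q).hasFDerivWithinAt) polarCoord.symm.injOn f
  rw [polarCoord.symm_image_target_eq_source] at h
  refine (h.1 hf.integrableOn).congr_fun (fun q hq => ?_) polarCoord.open_target.measurableSet
  simp only [det_fderivPolarCoordSymm, abs_of_pos (show 0 < q.1 from hq.1)]

variable {f : ℝ² → ℝ}

lemma integrableOn_polar (hf : Integrable f) :
    IntegrableOn (fun q : ℝ × ℝ => q.1 * f (q.1 • polarUnit q.2)) (Ioi 0 ×ˢ Ioo (-π) π) := by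
  have h := integrableOn_polarCoord_target
    ((measurePreserving_prodEquivEuclidean.integrable_comp_emb
      prodEquivEuclidean.measurableEmbedding).2 hf)
  simp only [Function.comp_def, prodEquivEuclidean_polarCoord_symm, smul_eq_mul] at h
  exact h

lemma integral_eq_setIntegral_polar :
    ∫ p, f p = ∫ q in Ioi 0 ×ˢ Ioo (-π) π, q.1 * f (q.1 • polarUnit q.2) := by
  rw [← measurePreserving_prodEquivEuclidean.integral_comp' (g := f),
    ← integral_comp_polarCoord_symm]
  simp only [prodEquivEuclidean_polarCoord_symm, smul_eq_mul]
  rfl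

lemma integral_eq_integral_Ioi_integral_Ioo_polar (hf : Integrable f) :
    ∫ p, f p = ∫ r in Ioi 0, ∫ θ in Ioo (-π) π, r * f (r • polarUnit θ) := by
  rw [integral_eq_setIntegral_polar]
  exact setIntegral_prod _ (integrableOn_polar hf)

lemma integral_eq_integral_Ioo_integral_Ioi_polar (hf : Integrable f) :
    ∫ p, f p = ∫ θ in Ioo (-π) π, ∫ r in Ioi 0, r * f (r • polarUnit θ) := by
  rw [integral_eq_integral_Ioi_integral_Ioo_polar hf]
  refine integral_integral_swap ?_
  rw [Measure.prod_restrict]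
  exact integrableOn_polar hf

end Polar

lemma sq_add_sq_eq_norm_sq (p : ℝ²) : p 0 ^ 2 + p 1 ^ 2 = ‖p‖ ^ 2 := by
  simp [EuclideanSpace.norm_sq_eq, Fin.sum_univ_two]

lemma locallyIntegrable_coord_div_normSq (i : Fin 2) :
    LocallyIntegrable (fun p : ℝ² => p i / (p 0 ^ 2 + p 1 ^ 2)) := by
  refine locallyIntegrable_of_norm_le_rpow (C := 1) (α := 1) (by simp) (by simp)
    (ae_of_all _ fun p => ?_) ((Measurable.div (by fun_prop) (by fun_prop)).aestronglyMeasurable)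
  rcases eq_or_ne p 0 with rfl | hp
  · simp
  have hp' : 0 < ‖p‖ := norm_pos_iff.2 hp
  rw [sq_add_sq_eq_norm_sq, Real.rpow_neg_one, one_mul, norm_div, norm_pow, norm_norm,
    div_le_iff₀ (by positivity), pow_two, ← mul_assoc, inv_mul_cancel₀ hp'.ne', one_mul]
  exact PiLp.norm_apply_le p i

lemma locallyIntegrable_linear_div (a b c : ℝ) :
    LocallyIntegrable (fun p : ℝ² => (a * p 0 + b * p 1) / (c * (p 0 ^ 2 + p 1 ^ 2))) := by
  have h : (fun p : ℝ² => (a * p 0 + b * p 1) / (c * (p 0 ^ 2 + p 1 ^ 2))) =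
      (a / c) • (fun p : ℝ² => p 0 / (p 0 ^ 2 + p 1 ^ 2)) +
        (b / c) • (fun p : ℝ² => p 1 / (p 0 ^ 2 + p 1 ^ 2)) := by
    ext p
    simp only [Pi.add_apply, Pi.smul_apply, smul_eq_mul]
    rw [mul_comm c, ← div_div]
    ring
  rw [h]
  exact ((locallyIntegrable_coord_div_normSq 0).smul _).add
    ((locallyIntegrable_coord_div_normSq 1).smul _)

lemma integrable_coord_mul_div_normSq (i : Fin 2) {h : ℝ² → ℝ} (hc : Continuous h)
    (hs : HasCompactSupport h) :
    Integrable (fun p : ℝ² => p i * h p / (p 0 ^ 2 + p 1 ^ 2)) := by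
  refine ((locallyIntegrable_coord_div_normSq i).integrable_smul_right_of_hasCompactSupport hc hs
    ).congr (ae_of_all _ fun p => ?_)
  simp only [smul_eq_mul]
  ring

section Quotients

noncomputable def radialQuotient (g : ℝ² → ℝ) (p : ℝ²) : ℝ :=
  (p 0 * pd 0 g p + p 1 * pd 1 g p) / (p 0 ^ 2 + p 1 ^ 2)

noncomputable def angularQuotient (g : ℝ² → ℝ) (p : ℝ²) : ℝ :=
  (p 0 * pd 1 g p - p 1 * pd 0 g p) / (p 0 ^ 2 + p 1 ^ 2)

variable {g : ℝ² → ℝ}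

lemma fderiv_apply_polarUnit (p : ℝ²) (θ : ℝ) :
    fderiv ℝ g p (polarUnit θ) = cos θ * pd 0 g p + sin θ * pd 1 g p := by
  simp [polarUnit, pd]

lemma hasDerivAt_along_ray (hg : Differentiable ℝ g) (r θ : ℝ) :
    HasDerivAt (fun s => g (s • polarUnit θ)) (fderiv ℝ g (r • polarUnit θ) (polarUnit θ)) r := by
  have h := (hg (r • polarUnit θ)).hasFDerivAt.comp_hasDerivAt r
    ((hasDerivAt_id r).smul_const (polarUnit θ))
  simp only [id, one_smul] at h
  exact h

lemma hasDerivAt_along_circle (hg : Differentiable ℝ g) (r θ : ℝ) :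
    HasDerivAt (fun t => g (r • polarUnit t))
      (r * (cos θ * pd 1 g (r • polarUnit θ) - sin θ * pd 0 g (r • polarUnit θ))) θ := by
  have hu : HasDerivAt polarUnit
      (-sin θ • EuclideanSpace.single 0 1 + cos θ • EuclideanSpace.single 1 1) θ :=
    ((hasDerivAt_cos θ).smul_const _).add ((hasDerivAt_sin θ).smul_const _)
  refine ((hg (r • polarUnit θ)).hasFDerivAt.comp_hasDerivAt θ (hu.const_smul r)).congr_deriv ?_
  simp only [map_smul, map_add, smul_eq_mul, pd]
  ring

lemma mul_radialQuotient_smul_polarUnit {r : ℝ} (hr : 0 < r) (θ : ℝ) :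
    r * radialQuotient g (r • polarUnit θ) = fderiv ℝ g (r • polarUnit θ) (polarUnit θ) := by
  have hden : (r * cos θ) ^ 2 + (r * sin θ) ^ 2 = r ^ 2 := by
    linear_combination r ^ 2 * cos_sq_add_sin_sq θ
  rw [fderiv_apply_polarUnit, radialQuotient, smul_polarUnit_apply_zero,
    smul_polarUnit_apply_one, hden]
  field_simp

lemma mul_angularQuotient_smul_polarUnit {r : ℝ} (hr : 0 < r) (θ : ℝ) :
    r * angularQuotient g (r • polarUnit θ) =
      r⁻¹ * (r * (cos θ * pd 1 g (r • polarUnit θ) - sin θ * pd 0 g (r • polarUnit θ))) := by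
  have hden : (r * cos θ) ^ 2 + (r * sin θ) ^ 2 = r ^ 2 := by
    linear_combination r ^ 2 * cos_sq_add_sin_sq θ
  rw [angularQuotient, smul_polarUnit_apply_zero, smul_polarUnit_apply_one, hden]
  field_simp

lemma integrable_radialQuotient (hg : ContDiff ℝ 1 g) (hs : HasCompactSupport g) :
    Integrable (radialQuotient g) := by
  have hc (α : Fin 2) : Continuous (pd α g) := (contDiff_pd (n := 0) hg α).continuous
  refine ((integrable_coord_mul_div_normSq 0 (hc 0) (hasCompactSupport_pd hs 0)).add
    (integrable_coord_mul_div_normSq 1 (hc 1) (hasCompactSupport_pd hs 1))).congr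
    (ae_of_all _ fun p => ?_)
  simp only [radialQuotient, add_div, Pi.add_apply]

lemma integrable_angularQuotient (hg : ContDiff ℝ 1 g) (hs : HasCompactSupport g) :
    Integrable (angularQuotient g) := by
  have hc (α : Fin 2) : Continuous (pd α g) := (contDiff_pd (n := 0) hg α).continuous
  refine ((integrable_coord_mul_div_normSq 0 (hc 1) (hasCompactSupport_pd hs 1)).sub
    (integrable_coord_mul_div_normSq 1 (hc 0) (hasCompactSupport_pd hs 0))).congr
    (ae_of_all _ fun p => ?_)
  simp only [angularQuotient, sub_div, Pi.sub_apply]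

theorem integral_radialQuotient (hg : ContDiff ℝ 1 g) (hs : HasCompactSupport g) :
    ∫ p, radialQuotient g p = -(2 * π * g 0) := by
  have hd : Differentiable ℝ g := hg.differentiable one_ne_zero
  have ray (θ : ℝ) : ∫ r in Ioi 0, r * radialQuotient g (r • polarUnit θ) = -g 0 := by
    have hray : HasCompactSupport (fun r : ℝ => g (r • polarUnit θ)) :=
      hs.comp_isClosedEmbedding (isClosedEmbedding_smul_left (polarUnit_ne_zero θ))
    calc ∫ r in Ioi 0, r * radialQuotient g (r • polarUnit θ)
        = ∫ r in Ioi 0, deriv (fun s : ℝ => g (s • polarUnit θ)) r :=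
          setIntegral_congr_fun measurableSet_Ioi fun r hr => by
            rw [mul_radialQuotient_smul_polarUnit hr,
              (hasDerivAt_along_ray hd r θ).deriv]
      _ = -g 0 := by
          have hG : ContDiff ℝ 1 (fun s : ℝ => g (s • polarUnit θ)) :=
            hg.comp (contDiff_id.smul contDiff_const)
          rw [hray.integral_Ioi_deriv_eq hG 0, zero_smul]
  rw [integral_eq_integral_Ioo_integral_Ioi_polar (integrable_radialQuotient hg hs),
    setIntegral_congr_fun measurableSet_Ioo fun θ _ => ray θ, setIntegral_const,
    Real.volume_real_Ioo_of_le (by linarith [pi_pos]), smul_eq_mul]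
  ring

theorem integral_angularQuotient (hg : ContDiff ℝ 1 g) (hs : HasCompactSupport g) :
    ∫ p, angularQuotient g p = 0 := by
  have hd : Differentiable ℝ g := hg.differentiable one_ne_zero
  have circle {r : ℝ} (hr : 0 < r) :
      ∫ θ in Ioo (-π) π, r * angularQuotient g (r • polarUnit θ) = 0 := by
    have hc (α : Fin 2) : Continuous (pd α g) := (contDiff_pd (n := 0) hg α).continuous
    have hu : Continuous polarUnit := by unfold polarUnit; fun_prop
    rw [setIntegral_congr_fun measurableSet_Ioo fun θ _ => mul_angularQuotient_smul_polarUnit hr θ,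
      integral_const_mul, ← integral_Ioc_eq_integral_Ioo,
      ← intervalIntegral.integral_of_le (by linarith [pi_pos]),
      intervalIntegral.integral_eq_sub_of_hasDerivAt
        (fun θ _ => hasDerivAt_along_circle hd r θ)
        (Continuous.intervalIntegrable (by fun_prop) _ _)]
    simp [polarUnit]
  rw [integral_eq_integral_Ioi_integral_Ioo_polar (integrable_angularQuotient hg hs)]
  simp [setIntegral_congr_fun measurableSet_Ioi fun r (hr : 0 < r) => circle hr]

lemma incompatibility_integrand_eq {φ : ℝ² → ℝ} (hφ : ContDiff ℝ 2 φ) (Bx By : ℝ) (p : ℝ²) :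
    Exx Bx By p * pd 1 (pd 1 φ) p + Eyy Bx By p * pd 0 (pd 0 φ) p
        - 2 * Exy Bx By p * pd 0 (pd 1 φ) p =
      (By * (radialQuotient (pd 0 φ) p - angularQuotient (pd 1 φ) p)
        - Bx * (radialQuotient (pd 1 φ) p + angularQuotient (pd 0 φ) p)) / (2 * π) := by
  simp only [Exx, Eyy, Exy, radialQuotient, angularQuotient, pd_pd_comm hφ 1 0 p, ← div_div]
  ring

end Quotients

end EdgeDislocation

open EdgeDislocation

/-- **Incompatibility of an edge dislocation** (equation (2.41) of the paper).
The strain components are locally integrable and the distributional planar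
incompatibility `∂_y²E_xx + ∂_x²E_yy − 2∂_x∂_yE_xy` equals
`B_y ∂_xδ₀ − B_x ∂_yδ₀`. -/
theorem edge_dislocation_incompatibility (Bx By : ℝ) :
    LocallyIntegrable (Exx Bx By) volume ∧
    LocallyIntegrable (Exy Bx By) volume ∧
    LocallyIntegrable (Eyy Bx By) volume ∧
    ∀ φ : EuclideanSpace ℝ (Fin 2) → ℝ, ContDiff ℝ (⊤ : ℕ∞) φ → HasCompactSupport φ →
      ∫ p : EuclideanSpace ℝ (Fin 2),
          (Exx Bx By p * pd 1 (pd 1 φ) p + Eyy Bx By p * pd 0 (pd 0 φ) p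
            - 2 * Exy Bx By p * pd 0 (pd 1 φ) p)
        = -By * pd 0 φ 0 + Bx * pd 1 φ 0 := by
  refine ⟨(locallyIntegrable_linear_div (-By) (-Bx) (2 * π)).congr
      (ae_of_all _ fun p => by simp only [Exx]; ring),
    (locallyIntegrable_linear_div Bx (-By) (2 * π)).congr
      (ae_of_all _ fun p => by simp only [Exy]; ring),
    locallyIntegrable_linear_div By Bx (2 * π), fun φ hφ hφs => ?_⟩
  have hφ2 : ContDiff ℝ 2 φ := hφ.of_le (WithTop.coe_le_coe.2 le_top)
  have hψ (α : Fin 2) : ContDiff ℝ 1 (pd α φ) := contDiff_pd (n := 1) hφ2 α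
  have hψs (α : Fin 2) : HasCompactSupport (pd α φ) := hasCompactSupport_pd hφs α
  have hR (α : Fin 2) := integrable_radialQuotient (hψ α) (hψs α)
  have hA (α : Fin 2) := integrable_angularQuotient (hψ α) (hψs α)
  simp_rw [incompatibility_integrand_eq hφ2]
  rw [integral_div, integral_sub, integral_const_mul, integral_const_mul,
    integral_sub (hR 0) (hA 1), integral_add (hR 1) (hA 0),
    integral_radialQuotient (hψ 0) (hψs 0), integral_radialQuotient (hψ 1) (hψs 1),
    integral_angularQuotient (hψ 0) (hψs 0), integral_angularQuotient (hψ 1) (hψs 1)]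
  · field_simp
    ring
  · exact ((hR 0).sub (hA 1)).const_mul By
  · exact ((hR 1).add (hA 0)).const_mul Bx
end
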